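/- Let B be an even simple Bratteli diagram with full group G=G_B and path space X=X_B, and let A⊊X be a clopen set. Then for every x∈X∖A, the orbit G°(A)·x is infinite. -/

import Mathlib

open MeasureTheory Filter
open scoped ENNReal ComplexOrder

noncomputable section

/-- A Bratteli diagram: vertex levels `V i`, edge levels `E i` (edges from `V i` to `V (i+1)`),
all levels finite and nonempty, a single root vertex, and source/range maps that are
surjective (every vertex emits and receives an edge). -/
structure BratteliDiagram where
  V : ℕ → Type
  E : ℕ → Type
  fintypeV : ∀ i, Fintype (V i)
  fintypeE : ∀ i, Fintype (E i)
  nonemptyV : ∀ i, Nonempty (V i)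
  nonemptyE : ∀ i, Nonempty (E i)
  subsingleton_root : Subsingleton (V 0)
  src : ∀ i, E i → V i
  rng : ∀ i, E i → V (i + 1)
  src_surj : ∀ i, Function.Surjective (src i)
  rng_surj : ∀ i, Function.Surjective (rng i)

namespace BratteliDiagram

variable (B : BratteliDiagram)

/-- The path space `X_B`: infinite paths starting at the root. -/
def Path : Type :=
  { x : ∀ i, B.E i // ∀ i, B.rng i (x i) = B.src (i + 1) (x (i + 1)) }

instance (i : ℕ) : UniformSpace (B.E i) := ⊥

instance instUniformSpacePath : UniformSpace B.Path :=
  inferInstanceAs (UniformSpace { x : ∀ i, B.E i // ∀ i, B.rng i (x i) = B.src (i + 1) (x (i + 1)) })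

instance instMeasurableSpacePath : MeasurableSpace B.Path := borel _

/-- Finite segments of `L+1` consecutive edges starting at level `n`. -/
def Seg (n L : ℕ) : Type :=
  { f : ∀ i : Fin (L + 1), B.E (n + (i : ℕ)) //
    ∀ (i : ℕ) (hi : i < L),
      B.rng (n + i) (f ⟨i, by omega⟩) = B.src (n + (i + 1)) (f ⟨i + 1, by omega⟩) }

/-- The number of finite paths connecting `v ∈ V n` to `w ∈ V (n + L + 1)`. -/
def numPaths (n L : ℕ) (v : B.V n) (w : B.V (n + L + 1)) : ℕ :=
  Nat.card { f : B.Seg n L //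
    B.src n (f.1 ⟨0, by omega⟩) = v ∧ B.rng (n + L) (f.1 ⟨L, by omega⟩) = w }

/-- A Bratteli diagram is simple if every vertex of a given level is connected
to every vertex of some deeper level. -/
def IsSimple : Prop :=
  ∀ n : ℕ, ∃ L : ℕ, ∀ (v : B.V n) (w : B.V (n + L + 1)), 0 < B.numPaths n L v w

/-- A Bratteli diagram is even if every vertex of a given level is connected to every
vertex of some deeper level by a (positive) even number of paths. -/
def IsEven : Prop :=
  ∀ n : ℕ, ∃ L : ℕ, ∀ (v : B.V n) (w : B.V (n + L + 1)),
    0 < B.numPaths n L v w ∧ Even (B.numPaths n L v w)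

/-- A permutation of the path space "of level `n`": it changes only the first `n` edges,
and what it does to the first `n` edges depends only on the first `n` edges. -/
def IsLevel (n : ℕ) (g : Equiv.Perm B.Path) : Prop :=
  (∀ (x : B.Path) (i : ℕ), n ≤ i → (g x).1 i = x.1 i) ∧
  (∀ x y : B.Path, (∀ i : ℕ, i < n → x.1 i = y.1 i) → ∀ i : ℕ, i < n → (g x).1 i = (g y).1 i)

theorem isLevel_one (n : ℕ) : B.IsLevel n 1 :=
  ⟨fun _ _ _ => rfl, fun _ _ h i hi => h i hi⟩

theorem IsLevel.mul {n : ℕ} {a b : Equiv.Perm B.Path} (ha : B.IsLevel n a)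
    (hb : B.IsLevel n b) : B.IsLevel n (a * b) := by
  constructor
  · intro x i hi
    have h1 := ha.1 (b x) i hi
    have h2 := hb.1 x i hi
    simpa [Equiv.Perm.mul_apply] using h1.trans h2
  · intro x y hxy i hi
    have h2 := hb.2 x y hxy
    have := ha.2 (b x) (b y) h2 i hi
    simpa [Equiv.Perm.mul_apply] using this

theorem IsLevel.mono {n m : ℕ} (hnm : n ≤ m) {g : Equiv.Perm B.Path}
    (h : B.IsLevel n g) : B.IsLevel m g := by
  refine ⟨fun x i hi => h.1 x i (hnm.trans hi), fun x y hxy i hi => ?_⟩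
  rcases lt_or_ge i n with h' | h'
  · exact h.2 x y (fun j hj => hxy j (hj.trans_le hnm)) i h'
  · rw [h.1 x i h', h.1 y i h']
    exact hxy i hi

/-- The group `G_n` of homeomorphisms of the path space permuting only the
first `n` edges of infinite paths. -/
def level (n : ℕ) : Subgroup (Equiv.Perm B.Path) where
  carrier := { g | B.IsLevel n g ∧ B.IsLevel n g⁻¹ }
  one_mem' := ⟨B.isLevel_one n, by simpa using B.isLevel_one n⟩
  mul_mem' := by
    intro a b ha hb
    exact ⟨ha.1.mul B hb.1, by rw [mul_inv_rev]; exact IsLevel.mul B hb.2 ha.2⟩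
  inv_mem' := by
    intro a ha
    exact ⟨ha.2, by simpa using ha.1⟩

theorem level_mono {n m : ℕ} (h : n ≤ m) : B.level n ≤ B.level m := by
  intro g hg
  exact ⟨hg.1.mono B h, hg.2.mono B h⟩

/-- The full group `G_B = ⋃ n, G_n` of the Bratteli diagram. -/
def fullGroup : Subgroup (Equiv.Perm B.Path) where
  carrier := { g | ∃ n, g ∈ B.level n }
  one_mem' := ⟨0, one_mem _⟩
  mul_mem' := by
    rintro a b ⟨n, ha⟩ ⟨m, hb⟩
    exact ⟨max n m, mul_mem (B.level_mono (le_max_left n m) ha)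
      (B.level_mono (le_max_right n m) hb)⟩
  inv_mem' := by
    rintro a ⟨n, ha⟩
    exact ⟨n, inv_mem ha⟩

/-- `G_n` viewed as a subgroup of the full group. -/
def levelIn (n : ℕ) : Subgroup ↥B.fullGroup := (B.level n).comap B.fullGroup.subtype

/-- The subgroup `G°(A)` of elements of the full group fixing `A` pointwise. -/
def Gcirc (A : Set B.Path) : Subgroup ↥B.fullGroup :=
  ⨅ x ∈ A, MulAction.stabilizer ↥B.fullGroup x

/-- `G°_n(A) = G_n ∩ G°(A)`. -/
def GcircN (n : ℕ) (A : Set B.Path) : Subgroup ↥B.fullGroup :=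
  B.levelIn n ⊓ B.Gcirc A

end BratteliDiagram

/-- Conjugation of a subgroup: `g • H = gHg⁻¹`. -/
def conjSub {Γ : Type*} [Group Γ] (g : Γ) (H : Subgroup Γ) : Subgroup Γ :=
  Subgroup.map (MulAut.conj g).toMonoidHom H

/-- The Borel structure on the space `Sub(Γ)` of subgroups of `Γ`,
induced from the product space `{0,1}^Γ` (equivalently `Set Γ`). -/
instance subgroupMeasurableSpace {Γ : Type*} [Group Γ] : MeasurableSpace (Subgroup Γ) :=
  MeasurableSpace.comap (fun H => (H : Set Γ)) inferInstance

namespace BratteliDiagram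

variable (B : BratteliDiagram)

/-- `F(A)`: the collection of subgroups of the full group normalized by `G°(A)`. -/
def FF (A : Set B.Path) : Set (Subgroup ↥B.fullGroup) :=
  { H | ∀ g ∈ B.Gcirc A, conjSub g H = H }

end BratteliDiagram

/-- A measure `ν` on `Y` is invariant under the action of `G`. -/
def MeasInv (G : Type*) [Group G] {Y : Type*} [MeasurableSpace Y] [MulAction G Y]
    (ν : Measure Y) : Prop :=
  ∀ (g : G) (s : Set Y), MeasurableSet s → ν ((fun y => g • y) ⁻¹' s) = ν s

/-- The action of `G` on `(Y, ν)` is ergodic: every invariant measurable set is null or conull. -/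
def MeasErg (G : Type*) [Group G] {Y : Type*} [MeasurableSpace Y] [MulAction G Y]
    (ν : Measure Y) : Prop :=
  ∀ s : Set Y, MeasurableSet s → (∀ g : G, (fun y => g • y) ⁻¹' s = s) → ν s = 0 ∨ ν s = 1

/-- An invariant random subgroup: a conjugation-invariant Borel probability measure on `Sub(G)`. -/
def IsIRS (G : Type*) [Group G] (φ : Measure (Subgroup G)) : Prop :=
  IsProbabilityMeasure φ ∧
    ∀ (g : G) (s : Set (Subgroup G)), MeasurableSet s → φ (conjSub g ⁻¹' s) = φ s

/-- An ergodic invariant random subgroup. -/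
def IsErgodicIRS (G : Type*) [Group G] (φ : Measure (Subgroup G)) : Prop :=
  IsIRS G φ ∧
    ∀ s : Set (Subgroup G), MeasurableSet s → (∀ g : G, conjSub g ⁻¹' s = s) →
      φ s = 0 ∨ φ s = 1

/-- A character of a group: normalized, central, positive semidefinite complex function. -/
def IsCharacter (G : Type*) [Group G] (χ : G → ℂ) : Prop :=
  χ 1 = 1 ∧ (∀ a b : G, χ (a * b) = χ (b * a)) ∧
    ∀ (n : ℕ) (g : Fin n → G) (c : Fin n → ℂ),
      0 ≤ ∑ i, ∑ j, (starRingEnd ℂ) (c i) * c j * χ (g i * (g j)⁻¹)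

namespace BratteliDiagram

variable (B : BratteliDiagram)

/-- The product measure `μ_α = μ_1^{α_1} × ⋯ × μ_k^{α_k}` on `X^{|α|}`,
realized on the index type `Σ i : Fin k, Fin (α i)` (of cardinality `|α| = Σ α i`). -/
def prodMeasure {k : ℕ} (μ : Fin k → Measure B.Path) (α : Fin k → ℕ) :
    Measure ((Σ i : Fin k, Fin (α i)) → B.Path) :=
  Measure.pi fun p => μ p.1

/-- The stabilizer distribution `φ_α` of the diagonal action of the full group
on `(X^{|α|}, μ_α)`. -/
def stabDist {k : ℕ} (μ : Fin k → Measure B.Path) (α : Fin k → ℕ) :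
    Measure (Subgroup ↥B.fullGroup) :=
  Measure.map (fun y => MulAction.stabilizer ↥B.fullGroup y) (B.prodMeasure μ α)

end BratteliDiagram

/-! If the orbit of `x` under `G°(A)` were finite, some cylinder around `x` would contain no
other point of the orbit; since `A` is closed, some cylinder around `x` also misses `A`.
Evenness yields, below any level `m`, two distinct finite paths between the same pair of
vertices, so `x` can be changed inside a window `[m, m + L]` while keeping its prefix and its
tail. The transposition of the two cylinders of length `m + L + 1` so obtained lies in the full
group, fixes `A` pointwise (both cylinders lie in the small cylinder around `x` that misses `A`),
and moves `x` to another point of that cylinder, a contradiction. -/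

namespace BratteliDiagram

variable {B : BratteliDiagram}

instance (i : ℕ) : DiscreteTopology (B.E i) := ⟨rfl⟩

instance : T2Space B.Path := inferInstanceAs (T2Space (Subtype _))

def cylinder (x : B.Path) (n : ℕ) : Set B.Path :=
  Subtype.val ⁻¹' PiNat.cylinder x.1 n

theorem self_mem_cylinder (x : B.Path) (n : ℕ) : x ∈ cylinder x n :=
  fun _ _ => rfl

theorem cylinder_anti (x : B.Path) {m n : ℕ} (h : m ≤ n) : cylinder x n ⊆ cylinder x m :=
  Set.preimage_mono (PiNat.cylinder_anti x.1 h)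

theorem exists_cylinder_subset_compl {S : Set B.Path} (hS : IsClosed S) {x : B.Path}
    (hx : x ∉ S) : ∃ n, cylinder x n ⊆ Sᶜ := by
  obtain ⟨U, hU, hUS⟩ := isOpen_induced_iff.mp hS.isOpen_compl
  have hxU : x ∈ Subtype.val ⁻¹' U := hUS ▸ hx
  obtain ⟨_, ⟨y, n, rfl⟩, hxy, hsub⟩ :=
    (PiNat.isTopologicalBasis_cylinders _).exists_subset_of_mem_open hxU hU
  refine ⟨n, fun z hz => ?_⟩
  rw [← hUS]
  exact hsub (PiNat.mem_cylinder_iff_eq.mp hxy ▸ hz)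

theorem src_eq_of_mem_cylinder {x y : B.Path} {k : ℕ} (hy : y ∈ cylinder x k) :
    B.src k (y.1 k) = B.src k (x.1 k) := by
  cases k with
  | zero => exact @Subsingleton.elim _ B.subsingleton_root _ _
  | succ j => rw [← y.2 j, ← x.2 j, hy j j.lt_succ_self]

-- `B.src k (y.1 k)` is the vertex of `V k` through which `y` passes.
def splice (z y : B.Path) (k : ℕ) (h : B.src k (z.1 k) = B.src k (y.1 k)) : B.Path :=
  ⟨fun i => if i < k then z.1 i else y.1 i, fun i => by
    dsimp only
    rcases lt_trichotomy (i + 1) k with hlt | rfl | hgt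
    · rw [if_pos (by omega : i < k), if_pos hlt]
      exact z.2 i
    · rw [if_pos (lt_add_one i), if_neg (lt_irrefl _), z.2 i, h]
    · rw [if_neg (by omega : ¬ i < k), if_neg (by omega : ¬ i + 1 < k)]
      exact y.2 i⟩

section Splice

variable {z w y : B.Path} {k : ℕ}

theorem splice_apply (h : B.src k (z.1 k) = B.src k (y.1 k)) (i : ℕ) :
    (splice z y k h).1 i = if i < k then z.1 i else y.1 i :=
  rfl

theorem splice_mem_cylinder (h : B.src k (z.1 k) = B.src k (y.1 k)) :
    splice z y k h ∈ cylinder z k :=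
  fun _ hi => if_pos hi

theorem splice_eq_self (h : B.src k (z.1 k) = B.src k (y.1 k)) (hy : y ∈ cylinder z k) :
    splice z y k h = y :=
  Subtype.ext <| funext fun i => by
    by_cases hi : i < k
    · rw [splice_apply, if_pos hi, hy i hi]
    · rw [splice_apply, if_neg hi]

theorem splice_splice (h : B.src k (w.1 k) = B.src k (y.1 k))
    (h' : B.src k (z.1 k) = B.src k ((splice w y k h).1 k))
    (h'' : B.src k (z.1 k) = B.src k (y.1 k)) :
    splice z (splice w y k h) k h' = splice z y k h'' :=
  Subtype.ext <| funext fun i => by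
    simp only [splice_apply]
    split_ifs <;> rfl

end Splice

section CylinderSwap

open scoped Classical

variable {x z : B.Path} {k : ℕ} (h : B.src k (x.1 k) = B.src k (z.1 k))

def cylinderSwap (y : B.Path) : B.Path :=
  if hx : y ∈ cylinder x k then splice z y k (h.symm.trans (src_eq_of_mem_cylinder hx).symm)
  else if hz : y ∈ cylinder z k then splice x y k (h.trans (src_eq_of_mem_cylinder hz).symm)
  else y

theorem cylinderSwap_apply_of_lt {y : B.Path} {i : ℕ} (hi : i < k) :
    (cylinderSwap h y).1 i =
      if y ∈ cylinder x k then z.1 i else if y ∈ cylinder z k then x.1 i else y.1 i := by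
  unfold cylinderSwap
  split_ifs <;> simp only [splice_apply, if_pos hi]

theorem cylinderSwap_apply_of_le {y : B.Path} {i : ℕ} (hi : k ≤ i) :
    (cylinderSwap h y).1 i = y.1 i := by
  unfold cylinderSwap
  split_ifs <;> simp only [splice_apply, if_neg (not_lt.2 hi)]

theorem cylinderSwap_eq_self {y : B.Path} (hx : y ∉ cylinder x k) (hz : y ∉ cylinder z k) :
    cylinderSwap h y = y := by
  rw [cylinderSwap, dif_neg hx, dif_neg hz]

theorem cylinderSwap_self_mem_cylinder : cylinderSwap h x ∈ cylinder z k := by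
  rw [cylinderSwap, dif_pos (self_mem_cylinder x k)]
  exact splice_mem_cylinder _

theorem cylinderSwap_of_mem_left {y : B.Path} (hx : y ∈ cylinder x k) :
    cylinderSwap h y = splice z y k (h.symm.trans (src_eq_of_mem_cylinder hx).symm) :=
  dif_pos hx

theorem cylinderSwap_of_mem_right {y : B.Path} (hx : y ∉ cylinder x k) (hz : y ∈ cylinder z k) :
    cylinderSwap h y = splice x y k (h.trans (src_eq_of_mem_cylinder hz).symm) := by
  rw [cylinderSwap, dif_neg hx, dif_pos hz]

theorem cylinderSwap_involutive : Function.Involutive (cylinderSwap h) := by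
  intro y
  by_cases hx : y ∈ cylinder x k
  · have hzy : B.src k (z.1 k) = B.src k (y.1 k) :=
      h.symm.trans (src_eq_of_mem_cylinder hx).symm
    have hsz := splice_mem_cylinder hzy
    rw [cylinderSwap_of_mem_left h hx]
    by_cases hsx : splice z y k hzy ∈ cylinder x k
    · have hyz : y ∈ cylinder z k := fun i hi => by
        rw [hx i hi, ← hsx i hi, hsz i hi]
      rw [cylinderSwap_of_mem_left h hsx, splice_eq_self _ hsz, splice_eq_self _ hyz]
    · rw [cylinderSwap_of_mem_right h hsx hsz, splice_splice, splice_eq_self _ hx]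
      exact (src_eq_of_mem_cylinder hx).symm
  by_cases hz : y ∈ cylinder z k
  · have hsx := splice_mem_cylinder (h.trans (src_eq_of_mem_cylinder hz).symm)
    rw [cylinderSwap_of_mem_right h hx hz, cylinderSwap_of_mem_left h hsx, splice_splice,
      splice_eq_self _ hz]
    exact (src_eq_of_mem_cylinder hz).symm
  · rw [cylinderSwap_eq_self h hx hz, cylinderSwap_eq_self h hx hz]

def cylinderSwapPerm : Equiv.Perm B.Path :=
  (cylinderSwap_involutive h).toPerm _

theorem isLevel_cylinderSwapPerm : B.IsLevel k (cylinderSwapPerm h) := by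
  refine ⟨fun y i hi => cylinderSwap_apply_of_le h hi, fun y y' hyy' i hi => ?_⟩
  have hcyl : ∀ w : B.Path, y ∈ cylinder w k ↔ y' ∈ cylinder w k := fun w =>
    ⟨fun hy j hj => (hyy' j hj).symm.trans (hy j hj), fun hy j hj => (hyy' j hj).trans (hy j hj)⟩
  simp only [cylinderSwapPerm, Function.Involutive.coe_toPerm, cylinderSwap_apply_of_lt h hi,
    hcyl, hyy' i hi]

theorem cylinderSwapPerm_mem_level : cylinderSwapPerm h ∈ B.level k :=
  ⟨isLevel_cylinderSwapPerm h, isLevel_cylinderSwapPerm h⟩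

end CylinderSwap

theorem mem_Gcirc_iff {A : Set B.Path} {g : B.fullGroup} :
    g ∈ B.Gcirc A ↔ ∀ y ∈ A, (g : Equiv.Perm B.Path) y = y := by
  simp only [Gcirc, Subgroup.mem_iInf, MulAction.mem_stabilizer_iff]
  rfl

def restrictSeg (x : B.Path) (m L : ℕ) : B.Seg m L :=
  ⟨fun j => x.1 (m + j), fun i _ => x.2 (m + i)⟩

section ReplaceSeg

variable {m L : ℕ}

def replaceSegFun (x : ∀ i, B.E i) (f : ∀ j : Fin (L + 1), B.E (m + j)) (i : ℕ) : B.E i :=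
  if h : m ≤ i ∧ i ≤ m + L then
    cast (congrArg B.E (Nat.add_sub_cancel' h.1)) (f ⟨i - m, by omega⟩)
  else x i

theorem replaceSegFun_add (x : ∀ i, B.E i) (f : ∀ j : Fin (L + 1), B.E (m + j)) {j : ℕ}
    (hj : j ≤ L) : replaceSegFun x f (m + j) = f ⟨j, by omega⟩ := by
  rw [replaceSegFun, dif_pos (by omega), cast_eq_iff_heq]
  exact congr_arg_heq f (Fin.ext (by simp))

theorem replaceSegFun_start (x : ∀ i, B.E i) (f : ∀ j : Fin (L + 1), B.E (m + j)) :
    replaceSegFun x f m = f ⟨0, L.succ_pos⟩ :=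
  replaceSegFun_add x f L.zero_le

theorem replaceSegFun_of_lt (x : ∀ i, B.E i) (f : ∀ j : Fin (L + 1), B.E (m + j)) {i : ℕ}
    (hi : i < m) : replaceSegFun x f i = x i :=
  dif_neg (by omega)

theorem replaceSegFun_of_gt (x : ∀ i, B.E i) (f : ∀ j : Fin (L + 1), B.E (m + j)) {i : ℕ}
    (hi : m + L < i) : replaceSegFun x f i = x i :=
  dif_neg (by omega)

def replaceSeg (x : B.Path) (f : B.Seg m L)
    (hv : B.src m (f.1 ⟨0, by omega⟩) = B.src m (x.1 m))
    (hw : B.rng (m + L) (f.1 ⟨L, by omega⟩) = B.rng (m + L) (x.1 (m + L))) : B.Path :=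
  ⟨replaceSegFun x.1 f.1, fun i => by
    rcases lt_trichotomy (i + 1) m with hi | rfl | hi
    · rw [replaceSegFun_of_lt _ _ (by omega), replaceSegFun_of_lt _ _ hi]
      exact x.2 i
    · rw [replaceSegFun_of_lt _ _ (by omega), replaceSegFun_start, hv]
      exact x.2 i
    obtain ⟨j, rfl⟩ : ∃ j, i = m + j := ⟨i - m, by omega⟩
    show B.rng (m + j) _ = B.src (m + (j + 1)) (replaceSegFun x.1 f.1 (m + (j + 1)))
    rcases lt_trichotomy j L with hj | rfl | hj
    · rw [replaceSegFun_add _ _ hj.le, replaceSegFun_add _ _ hj]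
      exact f.2 j hj
    · rw [replaceSegFun_add _ _ le_rfl, replaceSegFun_of_gt _ _ (by omega), hw]
      exact x.2 (m + j)
    · rw [replaceSegFun_of_gt _ _ (by omega), replaceSegFun_of_gt _ _ (by omega)]
      exact x.2 (m + j)⟩

end ReplaceSeg

theorem exists_mem_cylinder_notMem_cylinder (x : B.Path) {m L : ℕ}
    (h : 1 < B.numPaths m L (B.src m (x.1 m)) (B.rng (m + L) (x.1 (m + L)))) :
    ∃ z : B.Path, z ∈ cylinder x m ∧ z ∉ cylinder x (m + L + 1) ∧
      z.1 (m + L + 1) = x.1 (m + L + 1) := by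
  have : Finite _ := Nat.finite_of_card_ne_zero (ne_zero_of_lt h)
  have := Finite.one_lt_card_iff_nontrivial.mp h
  obtain ⟨⟨f, hv, hw⟩, hf⟩ := exists_ne (⟨restrictSeg x m L, rfl, rfl⟩ : { f : B.Seg m L //
    B.src m (f.1 ⟨0, L.succ_pos⟩) = B.src m (x.1 m) ∧
      B.rng (m + L) (f.1 ⟨L, L.lt_succ_self⟩) = B.rng (m + L) (x.1 (m + L)) })
  refine ⟨replaceSeg x f hv hw, fun i hi => replaceSegFun_of_lt _ _ hi, fun hmem => hf ?_,
    replaceSegFun_of_gt _ _ (by omega)⟩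
  refine Subtype.ext (Subtype.ext (funext fun j => ?_))
  rw [← replaceSegFun_add x.1 f.1 (Nat.lt_succ_iff.mp j.2)]
  exact hmem (m + j) (by omega)

end BratteliDiagram

open BratteliDiagram

theorem Gcirc_orbit_infinite_general (B : BratteliDiagram)
    (heven : B.IsEven)
    (A : Set B.Path) (hA : IsClopen A)
    (x : B.Path) (hx : x ∉ A) :
    (MulAction.orbit ↥(B.Gcirc A) x).Infinite := by
  intro hfin
  obtain ⟨n, hn⟩ := exists_cylinder_subset_compl hA.isClosed hx
  obtain ⟨N, hN⟩ := exists_cylinder_subset_compl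
    (hfin.subset (Set.sdiff_subset (t := {x}))).isClosed fun h => h.2 rfl
  set m := max n N
  obtain ⟨L, hL⟩ := heven m
  obtain ⟨hpos, ⟨c, hc⟩⟩ := hL (B.src m (x.1 m)) (B.rng (m + L) (x.1 (m + L)))
  obtain ⟨z, hzm, hzk, hz⟩ := exists_mem_cylinder_notMem_cylinder x
    (by omega : 1 < B.numPaths m L (B.src m (x.1 m)) (B.rng (m + L) (x.1 (m + L))))
  have hsrc : B.src _ (x.1 (m + L + 1)) = B.src _ (z.1 _) := by rw [hz]
  let g : B.fullGroup := ⟨cylinderSwapPerm hsrc, _, cylinderSwapPerm_mem_level hsrc⟩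
  have hcyl : cylinder z (m + L + 1) ⊆ cylinder x m := fun y hy i hi =>
    (hy i (by omega)).trans (hzm i hi)
  have hgA : g ∈ B.Gcirc A := mem_Gcirc_iff.2 fun y hy => cylinderSwap_eq_self hsrc
    (fun h => hn (cylinder_anti x (by omega) h) hy)
    (fun h => hn (cylinder_anti x (by omega) (hcyl h)) hy)
  have hgx : cylinderSwap hsrc x ∈ cylinder z (m + L + 1) := cylinderSwap_self_mem_cylinder hsrc
  have hne : cylinderSwap hsrc x ≠ x := fun h => hzk fun i hi => by rw [← hgx i hi, h]
  exact hN (cylinder_anti x (by omega) (hcyl hgx))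
    ⟨MulAction.mem_orbit x (⟨g, hgA⟩ : B.Gcirc A), hne⟩

/-- for a proper clopen set `A` and `x ∉ A`, the orbit `G°(A)·x` is infinite. -/
theorem Gcirc_orbit_infinite (B : BratteliDiagram)
    (hsimple : B.IsSimple) (heven : B.IsEven)
    (A : Set B.Path) (hA : IsClopen A) (hAne : A ≠ Set.univ)
    (x : B.Path) (hx : x ∉ A) :
    (MulAction.orbit ↥(B.Gcirc A) x).Infinite :=
  Gcirc_orbit_infinite_general B heven A hA x hx
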